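/- Let a, b ∈ ℂ, let Ω ⊆ ℂ be open, and let u, v : Ω → ℂ be differentiable functions with u(x) ≠ 0 for all x ∈ Ω, satisfying the Hamiltonian system for H_IV(x,u,v) = 2uv² − (u² + 2xu + 2a)v + bu, namely u'(x) = 4u(x)v(x) − u(x)² − 2x·u(x) − 2a and v'(x) = −2v(x)² + 2(u(x)+x)v(x) − b for all x ∈ Ω. Then u is a solution of the fourth Painlevé equation with parameters α = 2b − a + 1 and β = −2a²; that is, for all x ∈ Ω: u''(x) = u'(x)²/(2u(x)) + (3/2)u(x)³ + 4x·u(x)² + 2(x² − (2b − a + 1))·u(x) − 2a²/u(x). -/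
import Mathlib


/-- Okamoto Hamiltonian form of Painlevé IV: if `u, v : Ω → ℂ` (with `u ≠ 0` on the open set
`Ω`) satisfy the Hamiltonian system for `H_IV(x,u,v) = 2uv² − (u²+2xu+2a)v + bu`, namely
`u' = 4uv − u² − 2xu − 2a` and `v' = −2v² + 2(u+x)v − b`, then `u` solves the fourth
Painlevé equation with parameters `α = 2b − a + 1`, `β = −2a²`. -/
theorem stmt_7 (a b : ℂ) (Ω : Set ℂ) (hΩ : IsOpen Ω) (u v : ℂ → ℂ)
    (hu0 : ∀ x ∈ Ω, u x ≠ 0)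
    (hu : ∀ x ∈ Ω,
      HasDerivAt u (4 * u x * v x - (u x) ^ 2 - 2 * x * u x - 2 * a) x)
    (hv : ∀ x ∈ Ω,
      HasDerivAt v (-2 * (v x) ^ 2 + 2 * (u x + x) * v x - b) x) :
    ∀ x ∈ Ω, deriv (deriv u) x =
      (deriv u x) ^ 2 / (2 * u x) + (3 / 2) * (u x) ^ 3 + 4 * x * (u x) ^ 2
        + 2 * (x ^ 2 - (2 * b - a + 1)) * u x - 2 * a ^ 2 / u x := by
  intro x hx
  have hU := hu x hx
  have hV := hv x hx
  have hE : deriv u =ᶠ[nhds x]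
      fun y => 4 * u y * v y - (u y) ^ 2 - 2 * y * u y - 2 * a := by
    filter_upwards [hΩ.mem_nhds hx] with y hy using (hu y hy).deriv
  have hF : HasDerivAt (fun y => 4 * u y * v y - (u y) ^ 2 - 2 * y * u y - 2 * a)
      ((4 * (4 * u x * v x - (u x) ^ 2 - 2 * x * u x - 2 * a) * v x
          + 4 * u x * (-2 * (v x) ^ 2 + 2 * (u x + x) * v x - b))
        - 2 * u x ^ 1 * (4 * u x * v x - (u x) ^ 2 - 2 * x * u x - 2 * a)
        - (2 * 1 * u x + 2 * x * (4 * u x * v x - (u x) ^ 2 - 2 * x * u x - 2 * a))) x := by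
    exact ((((hU.const_mul 4).mul hV).sub (hU.pow 2)).sub
      (((hasDerivAt_id x).const_mul 2).mul hU)).sub_const (2 * a)
  have h2 : deriv (deriv u) x = _ := hE.deriv_eq.trans hF.deriv
  rw [h2, hU.deriv]
  have h0 := hu0 x hx
  field_simp
  ring
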